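/- arXiv:2206.00995 — 6 statements merged into one kernel-verified Lean document; each statement's English description precedes it below -/
import Mathlib

section
/- Any aperiodic right-infinite word over a finite alphabet has factor complexity at least n+1 for every n ≥ 0 (Morse–Hedlund). -/
/-- `u` is a factor of the right-infinite word `w`. -/
def IsFactor {α : Type*} (w : ℕ → α) (u : List α) : Prop :=
  ∃ i : ℕ, u = (List.range u.length).map fun j => w (i + j)

/-- Factor complexity: the number of factors of `w` of length `n`. -/
noncomputable def factorComplexity {α : Type*} (w : ℕ → α) (n : ℕ) : ℕ :=
  Set.ncard {u : List α | u.length = n ∧ IsFactor w u}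

/-- The conjugacy (rotation) class of a finite word. -/
def conjClass {α : Type*} (u : List α) : Set (List α) :=
  {v | ∃ i : ℕ, v = u.rotate i}

/-- Lie complexity: the number of conjugacy classes of words of length `n`
all of whose elements are factors of `w`. -/
noncomputable def lieComplexity {α : Type*} (w : ℕ → α) (n : ℕ) : ℕ :=
  Set.ncard {C : Set (List α) | ∃ u : List α, u.length = n ∧
    (∀ i : ℕ, IsFactor w (u.rotate i)) ∧ C = conjClass u}

/-- `w` is eventually periodic. -/
def EventuallyPeriodic {α : Type*} (w : ℕ → α) : Prop :=
  ∃ p : ℕ, 1 ≤ p ∧ ∃ N : ℕ, ∀ i : ℕ, N ≤ i → w (i + p) = w i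

/-! If `p (m + 1) ≤ p m` for some `m`, then (as `p` never decreases) every factor of length
`m` has exactly one right extension, so the length-`(m + 1)` window at position `i + 1` is
determined by the one at position `i`. There are finitely many such windows, so two positions
`i < j` carry the same window, and from then on the word repeats with period `j - i`.
Otherwise `p` is strictly increasing from `p 0 = 1`, whence `p n ≥ n + 1`. -/

theorem Set.Finite.exists_lt_forall_apply_add_eq {β : Type*} {f : ℕ → β}
    (hfin : (Set.range f).Finite) (hstep : ∀ i j, f i = f j → f (i + 1) = f (j + 1)) :
    ∃ i j, i < j ∧ ∀ d, f (i + d) = f (j + d) := by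
  obtain ⟨i, j, hij, heq⟩ := hfin.exists_lt_map_eq_of_forall_mem (f := f) Set.mem_range_self
  refine ⟨i, j, hij, fun d => ?_⟩
  induction d with
  | zero => exact heq
  | succ d ih => exact hstep _ _ ih

theorem eventuallyPeriodic_of_forall_add_eq {α : Type*} {w : ℕ → α} {i j : ℕ} (hij : i < j)
    (h : ∀ d, w (i + d) = w (j + d)) : EventuallyPeriodic w := by
  refine ⟨j - i, by omega, i, fun k hk => ?_⟩
  obtain ⟨d, rfl⟩ := Nat.exists_eq_add_of_le hk
  rw [show i + d + (j - i) = j + d by omega]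
  exact (h d).symm

namespace FactorComplexity

variable {α : Type*} (w : ℕ → α)

def window (n i : ℕ) : List α := (List.range n).map fun j => w (i + j)

@[simp]
theorem length_window (n i : ℕ) : (window w n i).length = n := by simp [window]

theorem window_succ (n i : ℕ) : window w (n + 1) i = w i :: window w n (i + 1) := by
  simp [window, List.range_succ_eq_map, Nat.add_assoc, Nat.add_comm 1]

theorem take_window_succ (n i : ℕ) : (window w (n + 1) i).take n = window w n i := by
  simp [window, ← List.map_take, List.take_range]

theorem setOf_isFactor_eq_range_window (n : ℕ) :
    {u : List α | u.length = n ∧ IsFactor w u} = Set.range (window w n) := by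
  ext u
  constructor
  · rintro ⟨rfl, i, hi⟩
    exact ⟨i, hi.symm⟩
  · rintro ⟨i, rfl⟩
    exact ⟨length_window w n i, i, by rw [length_window]; rfl⟩

theorem factorComplexity_eq_ncard_range_window (n : ℕ) :
    factorComplexity w n = (Set.range (window w n)).ncard := by
  rw [factorComplexity, setOf_isFactor_eq_range_window]

theorem range_window_eq_image_take (n : ℕ) :
    Set.range (window w n) = List.take n '' Set.range (window w (n + 1)) := by
  rw [← Set.range_comp]
  exact congrArg Set.range (funext fun i => (take_window_succ w n i).symm)

theorem factorComplexity_zero : factorComplexity w 0 = 1 := by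
  rw [factorComplexity_eq_ncard_range_window, ← Set.ncard_singleton ([] : List α)]
  congr
  ext u
  simp [window, eq_comm]

variable [Finite α]

theorem finite_range_window (n : ℕ) : (Set.range (window w n)).Finite :=
  (List.finite_length_eq α n).subset (by rintro _ ⟨i, rfl⟩; exact length_window w n i)

theorem factorComplexity_le_succ (n : ℕ) : factorComplexity w n ≤ factorComplexity w (n + 1) := by
  rw [factorComplexity_eq_ncard_range_window, factorComplexity_eq_ncard_range_window,
    range_window_eq_image_take]
  exact Set.ncard_image_le (finite_range_window w (n + 1))

variable {w}

theorem window_add_one_eq_of_factorComplexity_succ_le {m : ℕ}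
    (hm : factorComplexity w (m + 1) ≤ factorComplexity w m) {i j : ℕ}
    (hij : window w (m + 1) i = window w (m + 1) j) :
    window w (m + 1) (i + 1) = window w (m + 1) (j + 1) := by
  have hcard : (List.take m '' Set.range (window w (m + 1))).ncard
      = (Set.range (window w (m + 1))).ncard := by
    have := factorComplexity_le_succ w m
    rw [factorComplexity_eq_ncard_range_window, factorComplexity_eq_ncard_range_window] at this hm
    rw [← range_window_eq_image_take]
    omega
  have hinj := Set.injOn_of_ncard_image_eq hcard (finite_range_window w (m + 1))
  have htail : window w m (i + 1) = window w m (j + 1) := by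
    rw [window_succ, window_succ] at hij
    exact (List.cons.inj hij).2
  refine hinj ⟨i + 1, rfl⟩ ⟨j + 1, rfl⟩ ?_
  simpa only [take_window_succ] using htail

theorem eventuallyPeriodic_of_factorComplexity_succ_le {m : ℕ}
    (hm : factorComplexity w (m + 1) ≤ factorComplexity w m) : EventuallyPeriodic w := by
  obtain ⟨i, j, hij, heq⟩ := (finite_range_window w (m + 1)).exists_lt_forall_apply_add_eq
    fun _ _ => window_add_one_eq_of_factorComplexity_succ_le hm
  refine eventuallyPeriodic_of_forall_add_eq hij fun d => ?_
  have := heq d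
  rw [window_succ, window_succ] at this
  exact (List.cons.inj this).1

end FactorComplexity

open FactorComplexity in
/-- Morse–Hedlund: an aperiodic right-infinite word over a finite alphabet has
factor complexity at least `n + 1` for every `n`. -/
theorem morse_hedlund {α : Type*} [Fintype α] (w : ℕ → α)
    (hw : ¬ EventuallyPeriodic w) : ∀ n : ℕ, n + 1 ≤ factorComplexity w n := by
  have hmono : StrictMono (factorComplexity w) := strictMono_nat_of_lt_succ fun m => by
    by_contra! hm
    exact hw (eventuallyPeriodic_of_factorComplexity_succ_le hm)
  intro n
  simpa [factorComplexity_zero] using hmono.add_le_nat n 0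
end

section
/- For every right-infinite word w over a finite alphabet and every n ≥ 1, the Lie complexity satisfies L_w(n) ≤ p_w(n) − p_w(n−1) + 1. -/
/-!
Let `x` range over the factors of length `m` other than the prefix of `w`. Extending the first
occurrence of `x` one letter to the left gives a factor `ext x` of length `m + 1` with tail `x`;
since `x ↦ ext x` is injective, its image has `p(m) - 1` elements. The prefix of length `m` of
`ext x` occurs strictly before `x` does. So if every rotation of a word `u` of length `m + 1` were
of the form `ext x`, the first occurrence of the length-`m` prefix of `u.rotate j` would increase
strictly with `j`, which is absurd as `u.rotate (m + 1) = u`. Hence every Lie class of length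
`m + 1` contains one of the at most `p(m + 1) - p(m) + 1` factors of length `m + 1` outside the
image of `ext`, and distinct classes are disjoint.
-/

def factorAt {α : Type*} (w : ℕ → α) (i m : ℕ) : List α :=
  (List.range m).map fun j => w (i + j)

def factors {α : Type*} (w : ℕ → α) (m : ℕ) : Set (List α) :=
  {u | u.length = m ∧ IsFactor w u}

noncomputable def firstOccurrence {α : Type*} (w : ℕ → α) (x : List α) : ℕ :=
  sInf {i | x = factorAt w i x.length}

/-- The factor of length `x.length + 1` whose tail is the first occurrence of `x`, provided `x` is
a factor that is not a prefix of `w`; otherwise the truncated `- 1` makes it junk. -/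
noncomputable def leftExtension {α : Type*} (w : ℕ → α) (x : List α) : List α :=
  factorAt w (firstOccurrence w x - 1) (x.length + 1)

def nonPrefixFactors {α : Type*} (w : ℕ → α) (m : ℕ) : Set (List α) :=
  factors w m \ {factorAt w 0 m}

lemma List.take_rotate_one {α : Type*} (l : List α) :
    (l.rotate 1).take (l.length - 1) = l.tail := by
  cases l <;> simp

lemma List.take_rotate_succ {α : Type*} (l : List α) (j : ℕ) :
    (l.rotate (j + 1)).take (l.length - 1) = (l.rotate j).tail := by
  rw [← List.rotate_rotate, ← List.take_rotate_one, List.length_rotate]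

lemma mem_conjClass_iff {α : Type*} {u v : List α} : v ∈ conjClass u ↔ u ~r v :=
  ⟨fun ⟨i, h⟩ => ⟨i, h.symm⟩, fun ⟨i, h⟩ => ⟨i, h.symm⟩⟩

lemma conjClass_eq_of_mem {α : Type*} {u v : List α} (h : v ∈ conjClass u) :
    conjClass v = conjClass u := by
  have huv := mem_conjClass_iff.1 h
  ext x
  simp only [mem_conjClass_iff]
  exact ⟨huv.trans, huv.symm.trans⟩

section Factors

variable {α : Type*} {w : ℕ → α} {x : List α} {i m M : ℕ}

@[simp] lemma length_factorAt : (factorAt w i m).length = m := by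
  simp [factorAt]

lemma factorAt_mem_factors : factorAt w i m ∈ factors w m :=
  ⟨length_factorAt, i, by rw [length_factorAt]; rfl⟩

lemma factors_finite [Finite α] : (factors w m).Finite :=
  (List.finite_length_eq α m).subset fun _ hu => hu.1

lemma tail_factorAt : (factorAt w i (m + 1)).tail = factorAt w (i + 1) m := by
  simp only [factorAt, List.range_succ_eq_map, List.map_cons, List.map_map, List.tail_cons]
  exact List.map_congr_left fun j _ => congrArg w (by simp; omega)

lemma take_factorAt (h : m ≤ M) : (factorAt w i M).take m = factorAt w i m := by
  simp [factorAt, ← List.map_take, List.take_range, Nat.min_eq_left h]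

lemma eq_factorAt_firstOccurrence (hx : IsFactor w x) :
    x = factorAt w (firstOccurrence w x) x.length :=
  Nat.sInf_mem (hx : ∃ i, x = factorAt w i x.length)

lemma firstOccurrence_factorAt_le : firstOccurrence w (factorAt w i m) ≤ i :=
  Nat.sInf_le (show _ = factorAt w i _ by rw [length_factorAt])

lemma firstOccurrence_pos (hx : x ∈ nonPrefixFactors w m) : 0 < firstOccurrence w x := by
  obtain ⟨⟨rfl, hfac⟩, hne⟩ := hx
  refine Nat.pos_of_ne_zero fun h0 => hne ?_
  rw [eq_factorAt_firstOccurrence hfac, h0, length_factorAt]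
  exact Set.mem_singleton _

lemma leftExtension_mem_factors (hx : x ∈ nonPrefixFactors w m) :
    leftExtension w x ∈ factors w (m + 1) := by
  rw [← hx.1.1]
  exact factorAt_mem_factors

lemma tail_leftExtension (hx : x ∈ nonPrefixFactors w m) : (leftExtension w x).tail = x := by
  rw [leftExtension, tail_factorAt, Nat.sub_add_cancel (firstOccurrence_pos hx)]
  exact (eq_factorAt_firstOccurrence hx.1.2).symm

lemma leftExtension_injOn : Set.InjOn (leftExtension w) (nonPrefixFactors w m) :=
  fun x hx y hy h => by rw [← tail_leftExtension hx, ← tail_leftExtension hy, h]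

lemma firstOccurrence_take_leftExtension_lt (hx : x ∈ nonPrefixFactors w m) :
    firstOccurrence w ((leftExtension w x).take m) < firstOccurrence w x := by
  rw [leftExtension, take_factorAt (by rw [hx.1.1]; omega)]
  exact firstOccurrence_factorAt_le.trans_lt (Nat.sub_lt (firstOccurrence_pos hx) one_pos)

theorem exists_rotate_notMem_image_leftExtension {u : List α} (hu : u.length = m + 1) :
    ∃ j, u.rotate j ∉ leftExtension w '' nonPrefixFactors w m := by
  by_contra! h
  let g j := firstOccurrence w ((u.rotate j).take m)
  have hg : ∀ j, g j < g (j + 1) := by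
    intro j
    obtain ⟨x, hx, hxj⟩ := h j
    have hnext : (u.rotate (j + 1)).take m = x := by
      rw [show m = u.length - 1 by omega, List.take_rotate_succ, ← hxj, tail_leftExtension hx]
    simp only [g, hnext, ← hxj]
    exact firstOccurrence_take_leftExtension_lt hx
  have hlt : g 0 < g (m + 1) := strictMono_nat_of_lt_succ hg (Nat.succ_pos m)
  simp only [g, List.rotate_zero] at hlt
  rw [← hu, List.rotate_length] at hlt
  exact lt_irrefl _ hlt

theorem lieComplexity_succ_le [Finite α] :
    lieComplexity w (m + 1) ≤
      (factors w (m + 1) \ leftExtension w '' nonPrefixFactors w m).ncard := by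
  have hfin := (factors_finite (w := w) (m := m + 1)).sdiff
    (t := leftExtension w '' nonPrefixFactors w m)
  refine (Set.ncard_le_ncard ?_ (hfin.image conjClass)).trans (Set.ncard_image_le hfin)
  rintro _ ⟨u, hu, hrot, rfl⟩
  obtain ⟨j, hj⟩ := exists_rotate_notMem_image_leftExtension (w := w) hu
  exact ⟨u.rotate j, ⟨⟨by simp [hu], hrot j⟩, hj⟩, conjClass_eq_of_mem ⟨j, rfl⟩⟩

theorem ncard_factors_diff_image_leftExtension_le [Finite α] :
    (factors w (m + 1) \ leftExtension w '' nonPrefixFactors w m).ncard ≤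
      factorComplexity w (m + 1) - factorComplexity w m + 1 := by
  have hsub : leftExtension w '' nonPrefixFactors w m ⊆ factors w (m + 1) := by
    rintro _ ⟨x, hx, rfl⟩
    exact leftExtension_mem_factors hx
  have himage : (leftExtension w '' nonPrefixFactors w m).ncard = factorComplexity w m - 1 := by
    rw [leftExtension_injOn.ncard_image, nonPrefixFactors,
      Set.ncard_sdiff_singleton_of_mem factorAt_mem_factors]
    rfl
  have hpos : 0 < factorComplexity w m :=
    (Set.ncard_pos factors_finite).2 ⟨_, factorAt_mem_factors (i := 0)⟩
  rw [Set.ncard_sdiff hsub (factors_finite.subset hsub), himage]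
  show factorComplexity w (m + 1) - (factorComplexity w m - 1) ≤ _
  omega

lemma lieComplexity_zero_le_one (w : ℕ → α) : lieComplexity w 0 ≤ 1 := by
  refine (Set.ncard_le_ncard (t := {conjClass []}) ?_).trans (Set.ncard_singleton _).le
  rintro _ ⟨u, hu, -, rfl⟩
  rw [List.length_eq_zero_iff.1 hu]
  rfl

end Factors

theorem lieComplexity_le_general {α : Type*} [Fintype α] (w : ℕ → α) (n : ℕ) :
    lieComplexity w n ≤ factorComplexity w n - factorComplexity w (n - 1) + 1 := by
  cases n with
  | zero => simpa using lieComplexity_zero_le_one w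
  | succ m =>
    rw [Nat.add_sub_cancel]
    exact lieComplexity_succ_le.trans ncard_factors_diff_image_leftExtension_le

/-- Bell–Shallit: the Lie complexity is bounded by the first difference of the
factor complexity plus one. -/
theorem lieComplexity_le {α : Type*} [Fintype α] (w : ℕ → α) (n : ℕ) (hn : 1 ≤ n) :
    lieComplexity w n ≤ factorComplexity w n - factorComplexity w (n - 1) + 1 :=
  lieComplexity_le_general w n
end

section
/- Let w be a right-infinite word and n ≥ 1. The Lie classes of factors of w of length n are in bijection with the cycles in the Rauzy graph Γ_w(n) whose lengths divide n. -/
/-- `c` is (the edge list of) a simple cycle in the Rauzy graph `Γ_w(n)`: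
its entries are factors of `w` of length `n` (the edges), the target vertex
(length-`(n-1)` suffix) of each edge is the source vertex (length-`(n-1)` prefix)
of the next one, cyclically, and the visited vertices are pairwise distinct. -/
def IsRauzyCycle {α : Type*} (w : ℕ → α) (n : ℕ) (c : List (List α)) : Prop :=
  c ≠ [] ∧ (∀ u ∈ c, u.length = n ∧ IsFactor w u) ∧
  (∀ i : ℕ, i < c.length →
    (c.getD i []).tail = (c.getD ((i + 1) % c.length) []).dropLast) ∧
  (c.map List.dropLast).Nodup

/-!
The conjugates of a word `u` of length `n` are `u, u.rotate 1, …, u.rotate (p - 1)`, where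
`p ∣ n` is the least period of rotation of `u`. Consecutive rotations overlap in `n - 1` letters,
so they are the edges of a closed walk of length `p` in `Γ_w(n)`; the walk is simple because two
rotations of `u` are anagrams, hence equal as soon as their prefixes of length `n - 1` agree.
Conversely, along a cycle `c₀, …, c_{p-1}` the overlap condition forces the `j`-th letter of `cᵢ`
to be the first letter of `c_{i+j mod p}`; when `p ∣ n` this makes `cᵢ = c₀.rotate i`. So each
Lie class is literally the edge set of such a cycle, and conversely.
-/

open Function

namespace List

variable {α : Type*}

theorem getD_mem_of_lt {l : List α} {d : α} {i : ℕ} (hi : i < l.length) : l.getD i d ∈ l := by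
  rw [getD_eq_getElem _ _ hi]
  exact getElem_mem hi

theorem tail_eq_dropLast_rotate_one (l : List α) : l.tail = (l.rotate 1).dropLast := by
  cases l <;> simp

theorem eq_of_perm_of_dropLast_eq {l l' : List α} (hp : l ~ l') (h : l.dropLast = l'.dropLast) :
    l = l' := by
  rcases eq_nil_or_concat' l with rfl | ⟨L, b, rfl⟩
  · exact hp.nil_eq
  rcases eq_nil_or_concat' l' with rfl | ⟨L', b', rfl⟩
  · exact absurd hp.length_eq (by simp)
  simp only [dropLast_concat] at h
  subst h
  rw [singleton_perm.mp ((perm_append_left_iff L).mp hp)]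

theorem iterate_rotate_one (l : List α) (k : ℕ) : (rotate · 1)^[k] l = l.rotate k := by
  induction k with
  | zero => exact (rotate_zero l).symm
  | succ k ih => rw [iterate_succ_apply', ih, rotate_rotate]

noncomputable def rotationPeriod (l : List α) : ℕ := minimalPeriod (rotate · 1) l

theorem isPeriodicPt_rotate_one_length (l : List α) : IsPeriodicPt (rotate · 1) l.length l := by
  rw [IsPeriodicPt, IsFixedPt, iterate_rotate_one, rotate_length]

theorem rotationPeriod_pos (l : List α) : 0 < l.rotationPeriod := by
  refine minimalPeriod_pos_of_mem_periodicPts ?_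
  cases l with
  | nil => exact mk_mem_periodicPts one_pos rfl
  | cons a l => exact mk_mem_periodicPts (by simp) (isPeriodicPt_rotate_one_length _)

theorem rotationPeriod_dvd_length (l : List α) : l.rotationPeriod ∣ l.length :=
  (isPeriodicPt_rotate_one_length l).minimalPeriod_dvd

theorem rotate_mod_rotationPeriod (l : List α) (k : ℕ) :
    l.rotate (k % l.rotationPeriod) = l.rotate k := by
  have h := iterate_mod_minimalPeriod_eq (f := (rotate · 1)) (x := l) (n := k)
  rwa [iterate_rotate_one, iterate_rotate_one] at h

theorem dropLast_rotate_injOn (l : List α) :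
    (Set.Iio l.rotationPeriod).InjOn fun k => (l.rotate k).dropLast := by
  intro i hi j hj h
  refine iterate_injOn_Iio_minimalPeriod (f := (rotate · 1)) hi hj ?_
  simp only [iterate_rotate_one]
  exact eq_of_perm_of_dropLast_eq ((rotate_perm l i).trans (rotate_perm l j).symm) h

noncomputable def rotationCycle (l : List α) : List (List α) := (range l.rotationPeriod).map l.rotate

theorem length_rotationCycle (l : List α) : l.rotationCycle.length = l.rotationPeriod := by
  simp [rotationCycle]

theorem getD_rotationCycle (l : List α) {i : ℕ} (hi : i < l.rotationPeriod) :
    l.rotationCycle.getD i [] = l.rotate i := by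
  rw [getD_eq_getElem _ _ (by rwa [length_rotationCycle])]
  simp [rotationCycle]

theorem mem_rotationCycle {l v : List α} : v ∈ l.rotationCycle ↔ ∃ k, v = l.rotate k := by
  simp only [rotationCycle, mem_map, mem_range]
  constructor
  · rintro ⟨k, -, rfl⟩
    exact ⟨k, rfl⟩
  · rintro ⟨k, rfl⟩
    exact ⟨k % l.rotationPeriod, Nat.mod_lt _ l.rotationPeriod_pos, rotate_mod_rotationPeriod l k⟩

theorem nodup_map_dropLast_rotationCycle (l : List α) :
    (l.rotationCycle.map dropLast).Nodup := by
  rw [rotationCycle, map_map]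
  exact nodup_range.map_on fun i hi j hj h =>
    l.dropLast_rotate_injOn (mem_range.mp hi) (mem_range.mp hj) h

theorem tail_getD_rotationCycle (l : List α) {i : ℕ} (hi : i < l.rotationCycle.length) :
    (l.rotationCycle.getD i []).tail =
      (l.rotationCycle.getD ((i + 1) % l.rotationCycle.length) []).dropLast := by
  rw [length_rotationCycle] at hi ⊢
  rw [getD_rotationCycle l hi, getD_rotationCycle l (Nat.mod_lt _ l.rotationPeriod_pos),
    rotate_mod_rotationPeriod, tail_eq_dropLast_rotate_one, rotate_rotate]

end List

open List

section CyclicOverlap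

variable {α : Type*} {c : List (List α)} {n : ℕ}

theorem getElem?_getD_mod_eq (hlen : ∀ v ∈ c, v.length = n)
    (hstep : ∀ i < c.length, (c.getD i []).tail = (c.getD ((i + 1) % c.length) []).dropLast)
    {j : ℕ} (hj : j < n) (i : ℕ) :
    (c.getD (i % c.length) [])[j]? = (c.getD ((i + j) % c.length) [])[0]? := by
  induction j generalizing i with
  | zero => simp
  | succ j ih =>
    rcases eq_or_ne c [] with rfl | hc
    · simp
    have hp : 0 < c.length := length_pos_iff.mpr hc
    have hlen' : (c.getD ((i + 1) % c.length) []).length = n :=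
      hlen _ (getD_mem_of_lt (Nat.mod_lt _ hp))
    calc (c.getD (i % c.length) [])[j + 1]?
        = (c.getD (i % c.length) []).tail[j]? := getElem?_tail.symm
      _ = (c.getD ((i + 1) % c.length) []).dropLast[j]? := by
          rw [hstep _ (Nat.mod_lt _ hp), Nat.mod_add_mod]
      _ = (c.getD ((i + 1) % c.length) [])[j]? := by
          rw [getElem?_dropLast, if_pos (by omega)]
      _ = (c.getD ((i + (j + 1)) % c.length) [])[0]? := by
          rw [ih (by omega), add_right_comm, add_assoc]

theorem rotate_getD_zero_eq_getD_mod (hc : c ≠ []) (hlen : ∀ v ∈ c, v.length = n)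
    (hstep : ∀ i < c.length, (c.getD i []).tail = (c.getD ((i + 1) % c.length) []).dropLast)
    (hdvd : c.length ∣ n) (k : ℕ) :
    (c.getD 0 []).rotate k = c.getD (k % c.length) [] := by
  have hp : 0 < c.length := length_pos_iff.mpr hc
  have hlen' : ∀ i, (c.getD (i % c.length) []).length = n := fun i =>
    hlen _ (getD_mem_of_lt (Nat.mod_lt _ hp))
  have hlen₀ : (c.getD 0 []).length = n := by simpa using hlen' 0
  refine ext_getElem? fun j => ?_
  rcases lt_or_ge j n with hj | hj
  · have hletter := getElem?_getD_mod_eq hlen hstep (Nat.mod_lt (j + k) (by omega)) 0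
    rw [Nat.zero_mod, zero_add, Nat.mod_mod_of_dvd _ hdvd] at hletter
    rw [getElem?_rotate (by rwa [hlen₀]), hlen₀, hletter, getElem?_getD_mod_eq hlen hstep hj,
      add_comm]
  · rw [getElem?_eq_none (by rwa [length_rotate, hlen₀]), getElem?_eq_none (by rwa [hlen'])]

end CyclicOverlap

section RauzyCycle

variable {α : Type*} {w : ℕ → α}

theorem IsRauzyCycle.exists_conjClass_eq {n : ℕ} {c : List (List α)} (hc : IsRauzyCycle w n c)
    (hdvd : c.length ∣ n) :
    ∃ u : List α, u.length = n ∧ (∀ i, IsFactor w (u.rotate i)) ∧ conjClass u = {v | v ∈ c} := by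
  obtain ⟨hne, hfac, hstep, -⟩ := hc
  have hrot := rotate_getD_zero_eq_getD_mod hne (fun v hv => (hfac v hv).1) hstep hdvd
  have hmem : ∀ k, c.getD (k % c.length) [] ∈ c := fun k =>
    getD_mem_of_lt (Nat.mod_lt _ (length_pos_iff.mpr hne))
  refine ⟨c.getD 0 [], by simpa using (hfac _ (hmem 0)).1, fun k => hrot k ▸ (hfac _ (hmem k)).2,
    Set.ext fun v => ⟨?_, fun hv => ?_⟩⟩
  · rintro ⟨k, rfl⟩
    exact hrot k ▸ hmem k
  · obtain ⟨i, hi, rfl⟩ := mem_iff_getElem.mp hv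
    exact ⟨i, by rw [hrot, Nat.mod_eq_of_lt hi, getD_eq_getElem]⟩

theorem isRauzyCycle_rotationCycle {u : List α} (hfac : ∀ i, IsFactor w (u.rotate i)) :
    IsRauzyCycle w u.length u.rotationCycle := by
  refine ⟨ne_nil_of_length_pos ?_, fun v hv => ?_, fun _ => u.tail_getD_rotationCycle,
    u.nodup_map_dropLast_rotationCycle⟩
  · exact u.length_rotationCycle ▸ u.rotationPeriod_pos
  · obtain ⟨k, rfl⟩ := mem_rotationCycle.mp hv
    exact ⟨length_rotate u k, hfac k⟩

end RauzyCycle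

theorem lieClasses_equiv_rauzy_cycles_general {α : Type*} (w : ℕ → α) (n : ℕ) :
    Nonempty
      (↥{C : Set (List α) | ∃ u : List α, u.length = n ∧
          (∀ i : ℕ, IsFactor w (u.rotate i)) ∧ C = conjClass u} ≃
       ↥{E : Set (List α) | ∃ c : List (List α),
          IsRauzyCycle w n c ∧ c.length ∣ n ∧ E = {u | u ∈ c}}) := by
  refine ⟨Equiv.setCongr (Set.ext fun E => ⟨?_, ?_⟩)⟩
  · rintro ⟨u, rfl, hfac, rfl⟩
    refine ⟨u.rotationCycle, isRauzyCycle_rotationCycle hfac, ?_, ?_⟩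
    · exact u.length_rotationCycle ▸ u.rotationPeriod_dvd_length
    · exact Set.ext fun v => mem_rotationCycle.symm
  · rintro ⟨c, hc, hdvd, rfl⟩
    obtain ⟨u, hlen, hfac, hu⟩ := hc.exists_conjClass_eq hdvd
    exact ⟨u, hlen, hfac, hu.symm⟩

/-- The Lie classes of factors of length `n` of `w` are in bijection with the
(edge sets of the) cycles of the Rauzy graph `Γ_w(n)` whose lengths divide `n`. -/
theorem lieClasses_equiv_rauzy_cycles {α : Type*} (w : ℕ → α) (n : ℕ) (hn : 1 ≤ n) :
    Nonempty
      (↥{C : Set (List α) | ∃ u : List α, u.length = n ∧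
          (∀ i : ℕ, IsFactor w (u.rotate i)) ∧ C = conjClass u} ≃
       ↥{E : Set (List α) | ∃ c : List (List α),
          IsRauzyCycle w n c ∧ c.length ∣ n ∧ E = {u | u ∈ c}}) :=
  lieClasses_equiv_rauzy_cycles_general w n
end

section
/- Let w be a right-infinite word, n ≥ 1, d a divisor of n, and suppose u_1, …, u_d are the consecutive edges of a cycle of length d in the Rauzy graph Γ_w(n). Then u_1, …, u_d all have period d, and they are exactly the d cyclic shifts of u_1. -/
/-!
Reading the cycle as a `d`-periodic sequence of words `v k`, the overlap condition
`(v k).tail = (v (k + 1)).dropLast` shifts letters along the cycle: the `j`-th letter of `v k`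
is the first letter of `v (k + j)`. Hence every word of the cycle is read off the single
`d`-periodic letter sequence `m ↦ (v m)[0]?`, which makes each word `d`-periodic and, as
`d ∣ n`, makes `v k` the `k`-th rotation of `v 0`.
-/

open Function

section Chain

variable {α : Type*} {n d : ℕ} {v : ℕ → List α}

theorem getElem?_eq_getElem?_zero_add_of_chain (hlen : ∀ k, (v k).length = n)
    (hchain : ∀ k, (v k).tail = (v (k + 1)).dropLast) :
    ∀ j < n, ∀ k, (v k)[j]? = (v (k + j))[0]? := by
  intro j
  induction j with
  | zero => simp
  | succ j ih =>
    intro hj k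
    calc (v k)[j + 1]? = (v k).tail[j]? := by rw [List.getElem?_tail]
      _ = (v (k + 1))[j]? := by rw [hchain, List.getElem?_dropLast, if_pos (by simp [hlen]; omega)]
      _ = (v (k + (j + 1)))[0]? := by rw [ih (by omega), Nat.add_right_comm, Nat.add_assoc]

theorem getElem?_add_eq_of_chain_of_periodic (hlen : ∀ k, (v k).length = n)
    (hchain : ∀ k, (v k).tail = (v (k + 1)).dropLast) (hv : Periodic v d) (k : ℕ) {j : ℕ}
    (hj : j + d < n) : (v k)[j]? = (v k)[j + d]? := by
  have shift := getElem?_eq_getElem?_zero_add_of_chain hlen hchain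
  rw [shift j (by omega), shift (j + d) hj, ← Nat.add_assoc, hv]

theorem eq_rotate_of_chain_of_periodic (hlen : ∀ k, (v k).length = n)
    (hchain : ∀ k, (v k).tail = (v (k + 1)).dropLast) (hv : Periodic v d) (hdvd : d ∣ n)
    (k : ℕ) : v k = (v 0).rotate k := by
  have shift := getElem?_eq_getElem?_zero_add_of_chain hlen hchain
  have hfirst : Periodic (fun m => (v m)[0]?) n := by
    obtain ⟨c, rfl⟩ := hdvd
    rw [mul_comm]
    exact (hv.comp (·[0]?)).nat_mul c
  ext1 j
  rcases lt_or_ge j n with hj | hj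
  · rw [List.getElem?_rotate (by rw [hlen]; exact hj), hlen, shift j hj,
      shift _ (Nat.mod_lt _ (by omega)), zero_add, hfirst.map_mod_nat, add_comm]
  · rw [List.getElem?_eq_none (by rw [hlen]; exact hj),
      List.getElem?_eq_none (by rw [List.length_rotate, hlen]; exact hj)]

end Chain

theorem rauzy_cycle_edges_are_shifts_general {α : Type*} (n d : ℕ)
    (hd : 0 < d) (hdvd : d ∣ n) (u : Fin d → List α)
    (hlen : ∀ i : Fin d, (u i).length = n)
    (hchain : ∀ i : Fin d,
      (u i).tail = (u ⟨(i.val + 1) % d, Nat.mod_lt _ hd⟩).dropLast) :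
    (∀ i : Fin d, ∀ j : ℕ, j + d < n → (u i)[j]? = (u i)[j + d]?) ∧
    (∀ i : Fin d, u i = (u ⟨0, hd⟩).rotate i.val) ∧
    (∀ v : List α, (∃ i : Fin d, v = u i) ↔ ∃ j : ℕ, j < d ∧ v = (u ⟨0, hd⟩).rotate j) := by
  set v : ℕ → List α := fun k => u ⟨k % d, Nat.mod_lt _ hd⟩
  have hu : ∀ i : Fin d, u i = v i := fun i =>
    congrArg u (Fin.ext (Nat.mod_eq_of_lt i.isLt).symm)
  have hv : Periodic v d := fun k => by simp only [v, Nat.add_mod_right]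
  have hvlen : ∀ k, (v k).length = n := fun k => hlen _
  have hvchain : ∀ k, (v k).tail = (v (k + 1)).dropLast := fun k => by
    simp only [v, hchain, Nat.mod_add_mod]
  have hrot : ∀ i : Fin d, u i = (u ⟨0, hd⟩).rotate i.val := fun i => by
    rw [hu, hu ⟨0, hd⟩]
    exact eq_rotate_of_chain_of_periodic hvlen hvchain hv hdvd i
  refine ⟨fun i j hj => ?_, hrot, fun x => ⟨?_, ?_⟩⟩
  · rw [hu]
    exact getElem?_add_eq_of_chain_of_periodic hvlen hvchain hv i hj
  · rintro ⟨i, rfl⟩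
    exact ⟨i, i.isLt, hrot i⟩
  · rintro ⟨j, hj, rfl⟩
    exact ⟨⟨j, hj⟩, (hrot ⟨j, hj⟩).symm⟩

/-- If `u 0, …, u (d-1)` are the consecutive edges of a cycle of length `d` in the
Rauzy graph `Γ_w(n)` with `d ∣ n`, then each `u i` has period `d` and the `u i` are
exactly the `d` cyclic shifts of `u 0`. -/
theorem rauzy_cycle_edges_are_shifts {α : Type*} (w : ℕ → α) (n d : ℕ)
    (hn : 1 ≤ n) (hd : 0 < d) (hdvd : d ∣ n) (u : Fin d → List α)
    (hlen : ∀ i : Fin d, (u i).length = n)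
    (hfac : ∀ i : Fin d, IsFactor w (u i))
    (hchain : ∀ i : Fin d,
      (u i).tail = (u ⟨(i.val + 1) % d, Nat.mod_lt _ hd⟩).dropLast)
    (hdistinct : Function.Injective fun i : Fin d => (u i).dropLast) :
    (∀ i : Fin d, ∀ j : ℕ, j + d < n → (u i)[j]? = (u i)[j + d]?) ∧
    (∀ i : Fin d, u i = (u ⟨0, hd⟩).rotate i.val) ∧
    (∀ v : List α, (∃ i : Fin d, v = u i) ↔ ∃ j : ℕ, j < d ∧ v = (u ⟨0, hd⟩).rotate j) :=
  rauzy_cycle_edges_are_shifts_general n d hd hdvd u hlen hchain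
end

section
/- Two Sturmian words with the same slope α have exactly the same set of factors. -/
/-- The Sturmian word of slope `a` and intercept `ρ`. -/
noncomputable def sturmianWord (a ρ : ℝ) (n : ℕ) : ℤ :=
  ⌊a * (n + 1) + ρ⌋ - ⌊a * n + ρ⌋

/-!
The factor of length `L` at position `i` of `sturmianWord a ρ` is the factor at position `0` of
`sturmianWord a (a * i + ρ)`; it depends only on `a * i + ρ` modulo `1`, and since `⌊·⌋` is
constant to the right of every point, it does not change when `a * i + ρ` is moved slightly to
the right. For irrational `a` the points `a * n + ρ'` (`n ∈ ℕ`) are dense modulo `1`, so one of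
them lands in such a window and `sturmianWord a ρ'` has the same factor at position `n`.
-/

open Filter Topology Set

theorem Irrational.denseRange_mul_nat_add_int {a : ℝ} (ha : Irrational a) :
    DenseRange fun p : ℕ × ℤ => a * p.1 + p.2 := by
  -- In a compact group the `ℕ`-multiples of an element are dense iff its `ℤ`-multiples are.
  have hdense : DenseRange (fun n : ℕ => n • (a : AddCircle (1 : ℝ))) := by
    rw [← denseRange_zsmul_iff_nsmul, AddCircle.denseRange_zsmul_coe_iff, div_one]
    exact ha
  rw [DenseRange]
  convert QuotientAddGroup.dense_preimage_mk.mpr hdense using 1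
  ext x
  simp only [mem_range, mem_preimage, Prod.exists, ← AddCircle.coe_nsmul]
  refine exists_congr fun n => ?_
  rw [eq_comm, ← sub_eq_zero, ← AddCircle.coe_sub, AddCircle.coe_eq_zero_iff]
  refine exists_congr fun k => ?_
  rw [nsmul_eq_mul, zsmul_one]
  constructor <;> intro h <;> linarith

theorem Int.eventually_floor_add_eq {α : Type*} [CommRing α] [LinearOrder α] [IsStrictOrderedRing α]
    [FloorRing α] [TopologicalSpace α] [OrderTopology α] (z : α) :
    ∀ᶠ t in 𝓝[≥] (0 : α), ⌊z + t⌋ = ⌊z⌋ := by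
  filter_upwards [Ico_mem_nhdsGE (sub_pos.mpr (Int.fract_lt_one z))] with t ht
  rw [Int.floor_eq_iff]
  have := Int.floor_add_fract z
  have := Int.fract_nonneg z
  constructor <;> linarith [ht.1, ht.2]

theorem sturmianWord_add_intCast (a ρ : ℝ) (k : ℤ) :
    sturmianWord a (ρ + k) = sturmianWord a ρ := by
  ext n
  simp only [sturmianWord, ← add_assoc, Int.floor_add_intCast]
  ring

theorem sturmianWord_add (a ρ : ℝ) (i j : ℕ) :
    sturmianWord a ρ (i + j) = sturmianWord a (a * i + ρ) j := by
  simp only [sturmianWord, Nat.cast_add]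
  ring_nf

theorem eventually_sturmianWord_add_eq (a ρ : ℝ) (j : ℕ) :
    ∀ᶠ t in 𝓝[≥] (0 : ℝ), sturmianWord a (ρ + t) j = sturmianWord a ρ j := by
  filter_upwards [Int.eventually_floor_add_eq (a * (j + 1) + ρ),
    Int.eventually_floor_add_eq (a * j + ρ)] with t h₁ h₂
  simp only [sturmianWord, ← add_assoc, h₁, h₂]

theorem exists_pos_forall_sturmianWord_add_eq (a ρ : ℝ) (L : ℕ) :
    ∃ δ > 0, ∀ t ∈ Ico 0 δ, ∀ j < L, sturmianWord a (ρ + t) j = sturmianWord a ρ j := by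
  have h : ∀ᶠ t in 𝓝[≥] (0 : ℝ), ∀ j ∈ Finset.range L,
      sturmianWord a (ρ + t) j = sturmianWord a ρ j :=
    (eventually_all_finset _).mpr fun j _ => eventually_sturmianWord_add_eq a ρ j
  obtain ⟨δ, hδ, hsub⟩ := mem_nhdsGE_iff_exists_Ico_subset.mp h
  exact ⟨δ, hδ, fun t ht j hj => hsub ht j (Finset.mem_range.mpr hj)⟩

theorem IsFactor.sturmianWord_of_irrational {a ρ ρ' : ℝ} (ha : Irrational a) {u : List ℤ}
    (hu : IsFactor (sturmianWord a ρ) u) : IsFactor (sturmianWord a ρ') u := by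
  obtain ⟨i, hu⟩ := hu
  set x := a * i + ρ
  obtain ⟨δ, hδ, hconst⟩ := exists_pos_forall_sturmianWord_add_eq a x u.length
  obtain ⟨⟨n, k⟩, ht₀, htδ⟩ := ha.denseRange_mul_nat_add_int.exists_mem_open
    isOpen_Ioo (nonempty_Ioo.mpr (lt_add_of_pos_right (x - ρ') hδ))
  have hshift : a * n + ρ' = x + (a * n + k - (x - ρ')) + ((-k : ℤ) : ℝ) := by push_cast; ring
  refine ⟨n, hu.trans (List.map_congr_left fun j hj => ?_)⟩
  rw [sturmianWord_add, sturmianWord_add, hshift, sturmianWord_add_intCast,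
    hconst _ ⟨by linarith, by linarith⟩ j (List.mem_range.mp hj)]

theorem sturmian_same_slope_same_factors_general (a : ℝ) (ha : Irrational a)
    (ρ ρ' : ℝ) :
    ∀ u : List ℤ, IsFactor (sturmianWord a ρ) u ↔ IsFactor (sturmianWord a ρ') u :=
  fun _ => ⟨IsFactor.sturmianWord_of_irrational ha, IsFactor.sturmianWord_of_irrational ha⟩

/-- Two Sturmian words with the same slope have exactly the same factors. -/
theorem sturmian_same_slope_same_factors (a : ℝ) (ha : Irrational a)
    (ha0 : 0 < a) (ha1 : a < 1) (ρ ρ' : ℝ) :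
    ∀ u : List ℤ, IsFactor (sturmianWord a ρ) u ↔ IsFactor (sturmianWord a ρ') u :=
  sturmian_same_slope_same_factors_general a ha ρ ρ'
end

section
/- The factor (010)^3 of the Fibonacci word occurs in the Fibonacci word, but not all of its conjugates are factors of the Fibonacci word; in particular, being a power of a standard word does not imply that all conjugates are factors. -/
/-- `m`-fold concatenation of the word `v`. -/
def listPow {α : Type*} (v : List α) (m : ℕ) : List α :=
  (List.replicate m v).flatten

/-- Standard words of the directive sequence `d` (shifted index: `stdWord d (k+1)`
is the standard word `s_k`, with `s_{-1} = 1`, `s_0 = 0`,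
`s_n = s_{n-1}^{d_n} s_{n-2}`). -/
def stdWord (d : ℕ → ℕ) : ℕ → List ℤ
  | 0 => [1]
  | 1 => [0]
  | n + 2 => listPow (stdWord d (n + 1)) (d (n + 1)) ++ stdWord d n


/-- Iterates of the Fibonacci morphism `0 ↦ 01, 1 ↦ 0` applied to `0`. -/
def fibIter : ℕ → List ℤ
  | 0 => [0]
  | n + 1 => (fibIter n).flatMap fun a => if a = 0 then [0, 1] else [0]

/-- The Fibonacci word, the fixed point of `0 ↦ 01, 1 ↦ 0` starting with `0`. -/
def fibWord (n : ℕ) : ℤ := (fibIter (n + 1)).getD n 0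

/-
`(010)^3` is a factor of `f_7 = φ⁷(0)`, a prefix of `f`, but its rotation `(001)^3` is a factor
of no `f_n`. The latter goes by induction along `f_{n+2} = f_{n+1} f_n`, strengthened so that the
factors crossing the junction are covered: `(001)^3` is not a factor of `f_n f_4` for `n ≥ 4`.
Since `f_4` has length 8 and is a prefix of `f_n`, every length-9 factor of
`f_{n+2} f_4 = f_{n+1} (f_n f_4)` lies in `f_{n+1} f_4` or in `f_n f_4`.
-/

theorem List.infix_append_take_or_infix_right {α : Type*} {l xs ys : List α} {k : ℕ}
    (hl : l.length ≤ k + 1) (h : l <:+: xs ++ ys) : l <:+: xs ++ ys.take k ∨ l <:+: ys := by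
  rcases List.infix_append_iff_ne_nil.mp h with h | h | ⟨l₁, l₂, hl₁, -, rfl, hs, hp⟩
  · exact .inl (List.infix_append_of_infix_left h)
  · exact .inr h
  · have hl₂ : l₂.length ≤ k := by
      have := List.length_pos_iff.mpr hl₁
      rw [List.length_append] at hl
      omega
    exact .inl <| List.infix_append_iff.mpr <|
      .inr <| .inr ⟨l₁, l₂, rfl, hs, List.prefix_take_iff.mpr ⟨hp, hl₂⟩⟩

theorem isFactor_iff_exists_infix {α : Type*} {w : ℕ → α} (L : ℕ → List α)
    (hL : ∀ n k (hk : k < (L n).length), w k = (L n)[k])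
    (hlen : ∀ m, ∃ n, m ≤ (L n).length) (u : List α) :
    IsFactor w u ↔ ∃ n, u <:+: L n := by
  constructor
  · rintro ⟨i, hi⟩
    obtain ⟨n, hn⟩ := hlen (i + u.length)
    refine ⟨n, List.infix_iff_getElem?.mpr ⟨i, by omega, fun j hj => ?_⟩⟩
    rw [List.getElem?_eq_getElem (by omega), ← hL, add_comm]
    simp [List.getElem_of_eq hi hj]
  · rintro ⟨n, hu⟩
    obtain ⟨i, hi, hget⟩ := List.infix_iff_getElem?.mp hu
    refine ⟨i, List.ext_getElem (by simp) fun j hj _ => ?_⟩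
    rw [List.getElem_map, List.getElem_range, add_comm i j, hL n (j + i) (by omega)]
    exact ((List.getElem_eq_iff _).mpr (hget j hj)).symm

theorem fibIter_add_two (n : ℕ) : fibIter (n + 2) = fibIter (n + 1) ++ fibIter n := by
  induction n with
  | zero => rfl
  | succ n ih =>
    change (fibIter (n + 2)).flatMap _ = (fibIter (n + 1)).flatMap _ ++ fibIter (n + 1)
    rw [ih, List.flatMap_append]
    rfl

theorem length_fibIter (n : ℕ) : (fibIter n).length = Nat.fib (n + 2) := by
  induction n using Nat.twoStepInduction with
  | zero => rfl
  | one => rfl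
  | more n ih₀ ih₁ =>
    rw [fibIter_add_two, List.length_append, ih₀, ih₁, Nat.fib_add_two (n := n + 2), add_comm]

theorem le_length_fibIter (n : ℕ) : n ≤ (fibIter n).length := by
  rw [length_fibIter, Nat.fib_add_two]
  have := Nat.le_fib_add_one n
  have : 0 < Nat.fib (n + 1) := Nat.fib_pos.mpr n.succ_pos
  omega

theorem fibIter_prefix_fibIter_succ (n : ℕ) : fibIter n <+: fibIter (n + 1) := by
  cases n with
  | zero => exact ⟨[1], rfl⟩
  | succ n => exact ⟨fibIter n, (fibIter_add_two n).symm⟩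

theorem fibIter_prefix_fibIter_of_le {m n : ℕ} (h : m ≤ n) : fibIter m <+: fibIter n := by
  induction n, h using Nat.le_induction with
  | base => exact List.prefix_refl _
  | succ n _ ih => exact ih.trans (fibIter_prefix_fibIter_succ n)

theorem fibWord_eq_getElem {n k : ℕ} (hk : k < (fibIter n).length) :
    fibWord k = (fibIter n)[k] := by
  have hk' : k < (fibIter (k + 1)).length := by have := le_length_fibIter (k + 1); omega
  rw [fibWord, List.getD_eq_getElem _ _ hk']
  rcases le_total n (k + 1) with h | h
  · exact ((fibIter_prefix_fibIter_of_le h).getElem hk).symm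
  · exact (fibIter_prefix_fibIter_of_le h).getElem hk'

theorem isFactor_fibWord_iff (u : List ℤ) : IsFactor fibWord u ↔ ∃ n, u <:+: fibIter n :=
  isFactor_iff_exists_infix fibIter (fun _ _ => fibWord_eq_getElem)
    (fun m => ⟨m, le_length_fibIter m⟩) u

theorem not_infix_fibIter_add_four_append (m : ℕ) :
    ¬ [0, 0, 1, 0, 0, 1, 0, 0, 1] <:+: fibIter (m + 4) ++ fibIter 4 := by
  induction m using Nat.twoStepInduction with
  | zero => decide
  | one => decide
  | more m ih₀ ih₁ =>
    intro h
    rw [show m + 2 + 4 = m + 4 + 2 by omega, fibIter_add_two, List.append_assoc] at h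
    rcases List.infix_append_take_or_infix_right (k := 8) (by simp) h with h | h
    · have htake : (fibIter (m + 4) ++ fibIter 4).take 8 = fibIter 4 :=
        (List.prefix_iff_eq_take.mp <|
          (fibIter_prefix_fibIter_of_le (Nat.le_add_left 4 m)).trans (List.prefix_append _ _)).symm
      exact ih₁ (htake ▸ h)
    · exact ih₀ h

theorem not_infix_fibIter (n : ℕ) : ¬ [0, 0, 1, 0, 0, 1, 0, 0, 1] <:+: fibIter n := fun h =>
  not_infix_fibIter_add_four_append n <|
    h.trans ((fibIter_prefix_fibIter_of_le (n.le_add_right 4)).isInfix.trans List.infix_append_left)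

/-- `(010)^3` is a factor of the Fibonacci word and `010` is a standard word, yet not
all conjugates of `(010)^3` are factors of the Fibonacci word: being a power of a
standard word does not imply that all conjugates are factors. -/
theorem fib_power_of_standard_not_all_conjugates :
    [0, 1, 0] = stdWord (fun _ => 1) 3 ∧
    IsFactor fibWord (listPow [0, 1, 0] 3) ∧
    ¬ ∀ i : ℕ, IsFactor fibWord ((listPow [0, 1, 0] 3).rotate i) := by
  refine ⟨rfl, (isFactor_fibWord_iff _).mpr ⟨7, by decide⟩, fun hall => ?_⟩
  have hrot : (listPow [0, 1, 0] 3 : List ℤ).rotate 2 = [0, 0, 1, 0, 0, 1, 0, 0, 1] := rfl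
  obtain ⟨n, hn⟩ := (isFactor_fibWord_iff _).mp (hrot ▸ hall 2)
  exact not_infix_fibIter n hn
end
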